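/- arXiv:math/9901065 — 2 statements merged into one kernel-verified Lean document; each statement's English description precedes it below -/
import Mathlib

section
/- Let V be a purely even restricted vertex algebra, A = V₀, V₁ its weight-one space, and π: V₁ → 𝒯 = V₁/Ω the projection. Define [x,y] = (x_{(0)}y - y_{(0)}x)/2 on V₁ and ⟨x,y⟩ = x_{(1)}y ∈ A. Then the Jacobiator J(x,y,z) = [[x,y],z] + [[y,z],x] + [[z,x],y] equals (1/6)·d I(x,y,z), where I(x,y,z) = ⟨x,[y,z]⟩ + ⟨y,[z,x]⟩ + ⟨z,[x,y]⟩ and d = ∂|_A. -/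
open scoped BigOperators

/-- The generalized binomial coefficient `C(m, j)` for `m ∈ ℤ`, as a complex number. -/
noncomputable def binom (m : ℤ) (j : ℕ) : ℂ :=
  (∏ i ∈ Finset.range j, ((m : ℂ) - (i : ℂ))) / (Nat.factorial j : ℂ)

/-- A purely even restricted graded vertex algebra: a vertex algebra (vacuum, Fourier modes
`coeff a n = a_{(n)}`, translation operator `T = ∂`, vacuum axiom, translation invariance and
the Borcherds identity) together with a grading by conformal weights `wt : ℤ → Submodule ℂ V`
(the eigenspace decomposition of the Hamiltonian `H`), with no negative conformal weights,
`vac` of weight `0`, and such that `a_{(n)} : V_Δ ⊗ V_{Δ'} → V_{Δ+Δ'-n-1}`. -/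
structure RestrictedVA (V : Type*) [AddCommGroup V] [Module ℂ V] where
  vac : V
  coeff : V → ℤ → Module.End ℂ V
  T : Module.End ℂ V
  wt : ℤ → Submodule ℂ V
  coeff_add : ∀ (a b : V) (n : ℤ), coeff (a + b) n = coeff a n + coeff b n
  coeff_smul : ∀ (c : ℂ) (a : V) (n : ℤ), coeff (c • a) n = c • coeff a n
  truncation : ∀ a b : V, ∃ N : ℤ, ∀ n ≥ N, coeff a n b = 0
  vac_field : ∀ n : ℤ, coeff vac n = if n = -1 then (1 : Module.End ℂ V) else 0
  T_vac : T vac = 0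
  creation_nonneg : ∀ (a : V) (n : ℤ), 0 ≤ n → coeff a n vac = 0
  creation_neg_one : ∀ a : V, coeff a (-1) vac = a
  translation : ∀ (a : V) (n : ℤ),
    T * coeff a n - coeff a n * T = ((-n : ℤ) : ℂ) • coeff a (n - 1)
  borcherds : ∀ (a b c : V) (m n k : ℤ),
    (∑ᶠ j : ℕ, binom m j • coeff (coeff a (n + j) b) (m + k - j) c) =
      (∑ᶠ j : ℕ, ((-1 : ℂ) ^ j * binom n j) • coeff a (n + m - j) (coeff b (k + j) c)) -
      (∑ᶠ j : ℕ, ((-1 : ℂ) ^ ((j : ℤ) + n) * binom n j) •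
        coeff b (n + k - j) (coeff a (m + j) c))
  wt_neg : ∀ d : ℤ, d < 0 → wt d = ⊥
  vac_wt : vac ∈ wt 0
  wt_indep : ∀ d : ℤ, Disjoint (wt d) (⨆ (e : ℤ) (_ : e ≠ d), wt e)
  wt_top : (⨆ d : ℤ, wt d) = ⊤
  wt_coeff : ∀ {a b : V} {d e : ℤ} (n : ℤ),
    a ∈ wt d → b ∈ wt e → coeff a n b ∈ wt (d + e - n - 1)

/-- The subspace `Ω ⊆ V₁` spanned by the elements `a ∂b` with `a, b ∈ A = V₀`
(the product being `a_{(-1)}`). -/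
def RestrictedVA.Omega {V : Type*} [AddCommGroup V] [Module ℂ V] (W : RestrictedVA V) :
    Submodule ℂ V :=
  Submodule.span ℂ {x | ∃ a b : V, a ∈ W.wt 0 ∧ b ∈ W.wt 0 ∧ x = W.coeff a (-1) (W.T b)}

/-- The bracket `[x,y] = (x_{(0)}y - y_{(0)}x)/2` on `V₁`. -/
noncomputable def RestrictedVA.br {V : Type*} [AddCommGroup V] [Module ℂ V]
    (W : RestrictedVA V) (x y : V) : V :=
  ((2 : ℂ))⁻¹ • (W.coeff x 0 y - W.coeff y 0 x)

/-- The symmetric pairing `⟨x,y⟩ = x_{(1)}y` on `V₁`, with values in `A = V₀`. -/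
def RestrictedVA.pr {V : Type*} [AddCommGroup V] [Module ℂ V]
    (W : RestrictedVA V) (x y : V) : V :=
  W.coeff x 1 y



namespace RestrictedVA

variable {V : Type*} [AddCommGroup V] [Module ℂ V] (W : RestrictedVA V)

lemma binom_right_zero (m : ℤ) : binom m 0 = 1 := by simp [binom]

lemma binom_zero_succ (j : ℕ) : binom 0 (j + 1) = 0 := by
  simp [binom, Finset.prod_range_succ']

lemma coeff_zero' (n : ℤ) : W.coeff 0 n = 0 := by
  have h := W.coeff_smul 0 0 n
  simpa using h

lemma coeff_neg' (a : V) (n : ℤ) : W.coeff (-a) n = -(W.coeff a n) := by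
  have h := W.coeff_smul (-1) a n
  simpa using h

lemma coeff_sub' (a b : V) (n : ℤ) : W.coeff (a - b) n = W.coeff a n - W.coeff b n := by
  rw [sub_eq_add_neg, W.coeff_add, W.coeff_neg', sub_eq_add_neg]

lemma coeff_eq_zero_of_wt {a b : V} {d e : ℤ} (n : ℤ) (ha : a ∈ W.wt d) (hb : b ∈ W.wt e)
    (h : d + e - n - 1 < 0) : W.coeff a n b = 0 := by
  have hm := W.wt_coeff n ha hb
  rw [W.wt_neg _ h] at hm
  simpa using hm

lemma T_eq (a : V) : W.T a = W.coeff a (-2) W.vac := by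
  have h := congrArg (fun f : Module.End ℂ V => f W.vac) (W.translation a (-1))
  simp only [LinearMap.sub_apply, Module.End.mul_apply, W.T_vac, W.creation_neg_one,
    map_zero, sub_zero, LinearMap.smul_apply] at h
  norm_num at h
  exact h

lemma comm0 (a b c : V) (k : ℤ) :
    W.coeff (W.coeff a 0 b) k c
      = W.coeff a 0 (W.coeff b k c) - W.coeff b k (W.coeff a 0 c) := by
  have h := W.borcherds a b c 0 0 k
  have e1 : (∑ᶠ j : ℕ, binom 0 j • W.coeff (W.coeff a (0 + (j : ℤ)) b) (0 + k - (j : ℤ)) c)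
      = W.coeff (W.coeff a 0 b) k c := by
    rw [finsum_eq_single _ 0 (fun j hj => ?_)]
    · norm_num [binom_right_zero]
    · obtain ⟨i, rfl⟩ := Nat.exists_eq_succ_of_ne_zero hj
      rw [binom_zero_succ, zero_smul]
  have e2 : (∑ᶠ j : ℕ, ((-1 : ℂ) ^ j * binom 0 j) • W.coeff a (0 + 0 - (j : ℤ))
        (W.coeff b (k + (j : ℤ)) c))
      = W.coeff a 0 (W.coeff b k c) := by
    rw [finsum_eq_single _ 0 (fun j hj => ?_)]
    · norm_num [binom_right_zero]
    · obtain ⟨i, rfl⟩ := Nat.exists_eq_succ_of_ne_zero hj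
      rw [binom_zero_succ, mul_zero, zero_smul]
  have e3 : (∑ᶠ j : ℕ, ((-1 : ℂ) ^ ((j : ℤ) + 0) * binom 0 j) • W.coeff b (0 + k - (j : ℤ))
        (W.coeff a (0 + (j : ℤ)) c))
      = W.coeff b k (W.coeff a 0 c) := by
    rw [finsum_eq_single _ 0 (fun j hj => ?_)]
    · norm_num [binom_right_zero]
    · obtain ⟨i, rfl⟩ := Nat.exists_eq_succ_of_ne_zero hj
      rw [binom_zero_succ, mul_zero, zero_smul]
  rw [e1, e2, e3] at h
  exact h

lemma skew0 {a b : V} (ha : a ∈ W.wt 1) (hb : b ∈ W.wt 1) :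
    W.coeff a 0 b + W.coeff b 0 a = W.T (W.coeff a 1 b) := by
  have h := W.borcherds a b W.vac (-1) 1 (-1)
  have e1 : (∑ᶠ j : ℕ, binom (-1) j • W.coeff (W.coeff a (1 + (j : ℤ)) b)
        (-1 + -1 - (j : ℤ)) W.vac)
      = W.T (W.coeff a 1 b) := by
    rw [finsum_eq_single _ 0 (fun j hj => ?_)]
    · rw [W.T_eq]
      norm_num [binom_right_zero]
    · obtain ⟨i, rfl⟩ := Nat.exists_eq_succ_of_ne_zero hj
      rw [W.coeff_eq_zero_of_wt _ ha hb (by push_cast; omega), W.coeff_zero']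
      simp
  have e2 : (∑ᶠ j : ℕ, ((-1 : ℂ) ^ j * binom 1 j) • W.coeff a (1 + -1 - (j : ℤ))
        (W.coeff b (-1 + (j : ℤ)) W.vac))
      = W.coeff a 0 b := by
    rw [finsum_eq_single _ 0 (fun j hj => ?_)]
    · norm_num [binom_right_zero, W.creation_neg_one]
    · obtain ⟨i, rfl⟩ := Nat.exists_eq_succ_of_ne_zero hj
      rw [W.creation_nonneg b _ (by push_cast; omega)]
      simp
  have e3 : (∑ᶠ j : ℕ, ((-1 : ℂ) ^ ((j : ℤ) + 1) * binom 1 j) • W.coeff b (1 + -1 - (j : ℤ))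
        (W.coeff a (-1 + (j : ℤ)) W.vac))
      = -(W.coeff b 0 a) := by
    rw [finsum_eq_single _ 0 (fun j hj => ?_)]
    · norm_num [binom_right_zero, W.creation_neg_one]
    · obtain ⟨i, rfl⟩ := Nat.exists_eq_succ_of_ne_zero hj
      rw [W.creation_nonneg a _ (by push_cast; omega)]
      simp
  rw [e1, e2, e3, sub_neg_eq_add] at h
  exact h.symm

lemma pairing_symm {a b : V} (ha : a ∈ W.wt 1) (hb : b ∈ W.wt 1) :
    W.coeff a 1 b = W.coeff b 1 a := by
  have h := W.borcherds a b W.vac (-1) 2 (-1)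
  have e1 : (∑ᶠ j : ℕ, binom (-1) j • W.coeff (W.coeff a (2 + (j : ℤ)) b)
        (-1 + -1 - (j : ℤ)) W.vac) = 0 := by
    refine finsum_eq_zero_of_forall_eq_zero fun j => ?_
    rw [W.coeff_eq_zero_of_wt _ ha hb (by push_cast; omega), W.coeff_zero']
    simp
  have e2 : (∑ᶠ j : ℕ, ((-1 : ℂ) ^ j * binom 2 j) • W.coeff a (2 + -1 - (j : ℤ))
        (W.coeff b (-1 + (j : ℤ)) W.vac))
      = W.coeff a 1 b := by
    rw [finsum_eq_single _ 0 (fun j hj => ?_)]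
    · norm_num [binom_right_zero, W.creation_neg_one]
    · obtain ⟨i, rfl⟩ := Nat.exists_eq_succ_of_ne_zero hj
      rw [W.creation_nonneg b _ (by push_cast; omega)]
      simp
  have e3 : (∑ᶠ j : ℕ, ((-1 : ℂ) ^ ((j : ℤ) + 2) * binom 2 j) • W.coeff b (2 + -1 - (j : ℤ))
        (W.coeff a (-1 + (j : ℤ)) W.vac))
      = W.coeff b 1 a := by
    rw [finsum_eq_single _ 0 (fun j hj => ?_)]
    · norm_num [binom_right_zero, W.creation_neg_one]
    · obtain ⟨i, rfl⟩ := Nat.exists_eq_succ_of_ne_zero hj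
      rw [W.creation_nonneg a _ (by push_cast; omega)]
      simp
  rw [e1, e2, e3] at h
  exact (sub_eq_zero.mp h.symm)

lemma wt1_coeff0 {a b : V} (ha : a ∈ W.wt 1) (hb : b ∈ W.wt 1) :
    W.coeff a 0 b ∈ W.wt 1 := by
  have h := W.wt_coeff 0 ha hb
  norm_num at h
  exact h

end RestrictedVA

/-- In a purely even restricted vertex algebra, with
`[x,y] = (x_{(0)}y - y_{(0)}x)/2` and `⟨x,y⟩ = x_{(1)}y`, the Jacobiator
`J(x,y,z) = [[x,y],z] + [[y,z],x] + [[z,x],y]` equals `(1/6)·d I(x,y,z)`, where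
`I(x,y,z) = ⟨x,[y,z]⟩ + ⟨y,[z,x]⟩ + ⟨z,[x,y]⟩` and `d = ∂|_A`. -/
theorem jacobiator_eq {V : Type*} [AddCommGroup V] [Module ℂ V]
    (W : RestrictedVA V) (x y z : V)
    (hx : x ∈ W.wt 1) (hy : y ∈ W.wt 1) (hz : z ∈ W.wt 1) :
    W.br (W.br x y) z + W.br (W.br y z) x + W.br (W.br z x) y =
      ((6 : ℂ))⁻¹ • W.T (W.pr x (W.br y z) + W.pr y (W.br z x) + W.pr z (W.br x y)) := by
  have hxy := W.wt1_coeff0 hx hy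
  have hyx := W.wt1_coeff0 hy hx
  have hyz := W.wt1_coeff0 hy hz
  have hzy := W.wt1_coeff0 hz hy
  have hzx := W.wt1_coeff0 hz hx
  have hxz := W.wt1_coeff0 hx hz
  -- T of pairings in terms of modes
  have hT_x_yz : W.T (W.coeff x 1 (W.coeff y 0 z))
      = W.coeff (W.coeff y 0 z) 0 x + W.coeff x 0 (W.coeff y 0 z) := by
    rw [W.pairing_symm hx hyz, ← W.skew0 hyz hx]
  have hT_x_zy : W.T (W.coeff x 1 (W.coeff z 0 y))
      = W.coeff (W.coeff z 0 y) 0 x + W.coeff x 0 (W.coeff z 0 y) := by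
    rw [W.pairing_symm hx hzy, ← W.skew0 hzy hx]
  have hT_y_zx : W.T (W.coeff y 1 (W.coeff z 0 x))
      = W.coeff (W.coeff z 0 x) 0 y + W.coeff y 0 (W.coeff z 0 x) := by
    rw [W.pairing_symm hy hzx, ← W.skew0 hzx hy]
  have hT_y_xz : W.T (W.coeff y 1 (W.coeff x 0 z))
      = W.coeff (W.coeff x 0 z) 0 y + W.coeff y 0 (W.coeff x 0 z) := by
    rw [W.pairing_symm hy hxz, ← W.skew0 hxz hy]
  have hT_z_xy : W.T (W.coeff z 1 (W.coeff x 0 y))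
      = W.coeff (W.coeff x 0 y) 0 z + W.coeff z 0 (W.coeff x 0 y) := by
    rw [W.pairing_symm hz hxy, ← W.skew0 hxy hz]
  have hT_z_yx : W.T (W.coeff z 1 (W.coeff y 0 x))
      = W.coeff (W.coeff y 0 x) 0 z + W.coeff z 0 (W.coeff y 0 x) := by
    rw [W.pairing_symm hz hyx, ← W.skew0 hyx hz]
  simp only [RestrictedVA.br, RestrictedVA.pr, W.coeff_smul, W.coeff_sub',
    LinearMap.smul_apply, LinearMap.sub_apply, map_add, map_sub, map_smul]
  rw [hT_x_yz, hT_x_zy, hT_y_zx, hT_y_xz, hT_z_xy, hT_z_yx,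
    W.comm0 x y z, W.comm0 y x z, W.comm0 y z x, W.comm0 z y x, W.comm0 z x y, W.comm0 x z y]
  module
end

section
/- Let V be a purely even restricted vertex algebra, with A = V₀, V₁, π: V₁ → 𝒯, bracket [x,y] = (x_{(0)}y - y_{(0)}x)/2, and pairing ⟨x,y⟩ = x_{(1)}y. Then ⟨ax, y⟩ = a⟨x,y⟩ - π(x)π(y)(a) for all a ∈ A and x, y ∈ V₁, where ax := a_{(-1)}x and π(x)(a) := x_{(0)}a. -/
open scoped BigOperators

lemma binom_zero_right (m : ℤ) : binom m 0 = 1 := by simp [binom]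

lemma binom_zero_of_ne {j : ℕ} (hj : j ≠ 0) : binom 0 j = 0 := by
  have h : (∏ i ∈ Finset.range j, (((0:ℤ) : ℂ) - (i : ℂ))) = 0 :=
    Finset.prod_eq_zero (Finset.mem_range.mpr (Nat.pos_of_ne_zero hj)) (by simp)
  simp only [binom]
  rw [h, zero_div]

lemma binom_neg_one (j : ℕ) : binom (-1) j = (-1 : ℂ) ^ j := by
  have h : (∏ i ∈ Finset.range j, (((-1:ℤ) : ℂ) - (i : ℂ))) = (-1:ℂ)^j * (Nat.factorial j : ℂ) := by
    induction j with
    | zero => simp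
    | succ n ih =>
      rw [Finset.prod_range_succ, ih, Nat.factorial_succ]
      push_cast
      ring
  have hf : (Nat.factorial j : ℂ) ≠ 0 := by
    exact_mod_cast Nat.cast_ne_zero.mpr (Nat.factorial_ne_zero j)
  simp only [binom]
  rw [h, mul_div_assoc, div_self hf, mul_one]

lemma RestrictedVA.coeff_zero_left {V : Type*} [AddCommGroup V] [Module ℂ V]
    (W : RestrictedVA V) (n : ℤ) : W.coeff 0 n = 0 := by
  simpa using W.coeff_smul 0 0 n

lemma RestrictedVA.eq_zero_of_mem_wt_neg {V : Type*} [AddCommGroup V] [Module ℂ V]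
    (W : RestrictedVA V) {v : V} {d : ℤ} (h : v ∈ W.wt d) (hd : d < 0) : v = 0 := by
  rw [W.wt_neg d hd, Submodule.mem_bot] at h
  exact h

/-- In a purely even restricted vertex algebra, with pairing `⟨x,y⟩ = x_{(1)}y`,
one has `⟨ax, y⟩ = a⟨x,y⟩ - π(x)π(y)(a)` for `a ∈ A = V₀` and `x, y ∈ V₁`, where
`ax := a_{(-1)}x` and `π(x)(a) := x_{(0)}a`. -/
theorem pairing_A_linearity_defect {V : Type*} [AddCommGroup V] [Module ℂ V]
    (W : RestrictedVA V) (a x y : V)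
    (ha : a ∈ W.wt 0) (hx : x ∈ W.wt 1) (hy : y ∈ W.wt 1) :
    W.pr (W.coeff a (-1) x) y =
      W.coeff a (-1) (W.pr x y) - W.coeff x 0 (W.coeff y 0 a) := by
  -- vanishing of a_{(j)} y for j ≥ 1 (weight reasons)
  have hay : ∀ j : ℤ, 1 ≤ j → W.coeff a j y = 0 := fun j hj =>
    W.eq_zero_of_mem_wt_neg (W.wt_coeff j ha hy) (by omega)
  -- vanishing of x_{(1+j)} y for j ≥ 1 (weight reasons)
  have hxy : ∀ j : ℤ, 1 ≤ j → W.coeff x (1 + j) y = 0 := fun j hj =>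
    W.eq_zero_of_mem_wt_neg (W.wt_coeff (1 + j) hx hy) (by omega)
  -- Step 1: skew symmetry  a_{(0)} y = - y_{(0)} a
  have hskew : W.coeff a 0 y = - W.coeff y 0 a := by
    have h1 := W.borcherds a y W.vac (-1) 0 0
    have hL : (∑ᶠ j : ℕ, binom (-1) j • W.coeff (W.coeff a (0 + j) y) (-1 + 0 - j) W.vac)
        = W.coeff a 0 y := by
      rw [finsum_eq_single _ 0]
      · simp [binom_zero_right, W.creation_neg_one]
      · intro j hj
        have h1j : (1 : ℤ) ≤ (j : ℤ) := by exact_mod_cast Nat.one_le_iff_ne_zero.mpr hj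
        have : W.coeff a (0 + (j : ℤ)) y = 0 := by
          rw [zero_add]; exact hay _ h1j
        rw [this, W.coeff_zero_left, LinearMap.zero_apply, smul_zero]
    have hR1 : (∑ᶠ j : ℕ, ((-1 : ℂ) ^ j * binom 0 j) •
        W.coeff a (0 + -1 - j) (W.coeff y (0 + j) W.vac)) = 0 := by
      apply finsum_eq_zero_of_forall_eq_zero
      intro j
      rw [W.creation_nonneg y (0 + j) (by positivity), map_zero, smul_zero]
    have hR2 : (∑ᶠ j : ℕ, ((-1 : ℂ) ^ ((j : ℤ) + 0) * binom 0 j) •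
        W.coeff y (0 + 0 - j) (W.coeff a (-1 + j) W.vac)) = W.coeff y 0 a := by
      rw [finsum_eq_single _ 0]
      · simp [binom_zero_right, W.creation_neg_one]
      · intro j hj
        rw [binom_zero_of_ne hj, mul_zero, zero_smul]
    rw [hL, hR1, hR2] at h1
    rw [h1, zero_sub]
  -- Step 2: the Borcherds identity with m = 0, n = -1, k = 1
  have h2 := W.borcherds a x y 0 (-1) 1
  have hL : (∑ᶠ j : ℕ, binom 0 j • W.coeff (W.coeff a (-1 + j) x) (0 + 1 - j) y)
      = W.coeff (W.coeff a (-1) x) 1 y := by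
    rw [finsum_eq_single _ 0]
    · simp [binom_zero_right]
    · intro j hj
      rw [binom_zero_of_ne hj, zero_smul]
  have hR1 : (∑ᶠ j : ℕ, ((-1 : ℂ) ^ j * binom (-1) j) •
      W.coeff a (-1 + 0 - j) (W.coeff x (1 + j) y)) = W.coeff a (-1) (W.coeff x 1 y) := by
    rw [finsum_eq_single _ 0]
    · simp [binom_zero_right]
    · intro j hj
      have h1j : (1 : ℤ) ≤ (j : ℤ) := by exact_mod_cast Nat.one_le_iff_ne_zero.mpr hj
      rw [hxy _ h1j, map_zero, smul_zero]
  have hR2 : (∑ᶠ j : ℕ, ((-1 : ℂ) ^ ((j : ℤ) + -1) * binom (-1) j) •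
      W.coeff x (-1 + 1 - j) (W.coeff a (0 + j) y)) = W.coeff x 0 (W.coeff y 0 a) := by
    rw [finsum_eq_single _ 0]
    · have h0 : W.coeff a (0 + ((0:ℕ) : ℤ)) y = - W.coeff y 0 a := by
        rw [Nat.cast_zero, add_zero]; exact hskew
      rw [h0]
      simp only [binom_zero_right, Nat.cast_zero, zero_add, zpow_neg, zpow_one, mul_one,
        smul_neg, neg_neg]
      norm_num
    · intro j hj
      have h1j : (1 : ℤ) ≤ (j : ℤ) := by exact_mod_cast Nat.one_le_iff_ne_zero.mpr hj
      have hz : W.coeff a (0 + (j : ℤ)) y = 0 := by rw [zero_add]; exact hay _ h1j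
      rw [hz, map_zero, smul_zero]
  rw [hL, hR1, hR2] at h2
  exact h2
end
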